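/- There exists a universal constant C > 0 with the following property. Let N ∈ ℕ, N ≥ 1, R = √(2π)·N, K_R = (−R/2, R/2)² ⊂ ℝ², and partition the closure of K_R into the N² closed congruent subsquares (Q_j) of side length √(2π) induced by the grid. Let 𝒮 be any subfamily of these subsquares (the 'good' squares), with cardinality N_good, and set N_bad = N² − N_good. Then for every δ ∈ (0, √(2π)/4) there exists a function φ : ℝ² → [0,1] such that: φ is Lipschitz with Lipschitz constant at most C/δ; φ vanishes outside the union of the interiors of the good squares; φ equals 1 at every point of a good square whose distance to that square's boundary exceeds δ; and for every C² function h : ℝ² → ℝ, |∫_{K_R} Δh(x)·φ(x) dx| ≤ C·( sup_{K_R}|∇h| + sup_{K_R}|Δh| )·( N_good·δ + N_bad + N ). -/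

import Mathlib

open MeasureTheory Set

/-- The Laplacian of `h : ℝ² → ℝ` as the sum of the second partial derivatives in
the coordinate directions. -/
noncomputable def lap (h : EuclideanSpace ℝ (Fin 2) → ℝ)
    (x : EuclideanSpace ℝ (Fin 2)) : ℝ :=
  ∑ i : Fin 2, fderiv ℝ (fun y => fderiv ℝ h y (EuclideanSpace.single i 1)) x
    (EuclideanSpace.single i 1)

/-- The open square `K_R = (-R/2, R/2)²` with `R = √(2π)·N`. -/
noncomputable def bigSquare (N : ℕ) : Set (EuclideanSpace ℝ (Fin 2)) :=
  {x | x 0 ∈ Set.Ioo (-(Real.sqrt (2 * Real.pi) * N) / 2) (Real.sqrt (2 * Real.pi) * N / 2) ∧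
       x 1 ∈ Set.Ioo (-(Real.sqrt (2 * Real.pi) * N) / 2) (Real.sqrt (2 * Real.pi) * N / 2)}

/-- The closed congruent subsquare of side `√(2π)` of the grid partition of the
closure of `K_R`, `R = √(2π)·N`, with grid indices `j = (j₁, j₂) ∈ (Fin N)²`. -/
noncomputable def gridSquare (N : ℕ) (j : Fin N × Fin N) :
    Set (EuclideanSpace ℝ (Fin 2)) :=
  {x | x 0 ∈ Set.Icc (-(Real.sqrt (2 * Real.pi) * N) / 2 + Real.sqrt (2 * Real.pi) * j.1)
          (-(Real.sqrt (2 * Real.pi) * N) / 2 + Real.sqrt (2 * Real.pi) * (j.1 + 1)) ∧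
       x 1 ∈ Set.Icc (-(Real.sqrt (2 * Real.pi) * N) / 2 + Real.sqrt (2 * Real.pi) * j.2)
          (-(Real.sqrt (2 * Real.pi) * N) / 2 + Real.sqrt (2 * Real.pi) * (j.2 + 1))}

abbrev E2 := EuclideanSpace ℝ (Fin 2)

noncomputable def Pm : (ℝ × ℝ) ≃ᵐ E2 :=
  (MeasurableEquiv.finTwoArrow).symm.trans (MeasurableEquiv.toLp 2 (Fin 2 → ℝ))

lemma Pm_zero (p : ℝ × ℝ) : Pm p 0 = p.1 := rfl
lemma Pm_one (p : ℝ × ℝ) : Pm p 1 = p.2 := rfl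

lemma ext2 {x y : E2} (h0 : x 0 = y 0) (h1 : x 1 = y 1) : x = y := by
  ext i; fin_cases i <;> assumption

lemma Pm_coords (x : E2) : Pm (x 0, x 1) = x := ext2 (Pm_zero _) (Pm_one _)

lemma volume_pres : MeasurePreserving (⇑Pm) volume volume :=
  ((EuclideanSpace.volume_preserving_symm_measurableEquiv_toLp (Fin 2)).symm).comp
    ((volume_preserving_finTwoArrow ℝ).symm _)

lemma Pm_cont : Continuous (⇑Pm) := by
  have : ⇑Pm = fun p : ℝ × ℝ => (EuclideanSpace.equiv (Fin 2) ℝ).symm ![p.1, p.2] :=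
    funext fun p => ext2 rfl rfl
  rw [this]
  exact (ContinuousLinearEquiv.continuous _).comp (by
    apply continuous_pi; intro i; fin_cases i
    · simpa using continuous_fst
    · simpa using continuous_snd)

lemma coord_le_dist (u v : E2) (i : Fin 2) : |u i - v i| ≤ dist u v := by
  rw [EuclideanSpace.dist_eq, ← Real.sqrt_sq_eq_abs]
  apply Real.sqrt_le_sqrt
  have := Finset.single_le_sum (f := fun k => dist (u k) (v k) ^ 2)
    (fun k _ => sq_nonneg _) (Finset.mem_univ i)
  simpa [Real.dist_eq] using this


noncomputable def sq2 : ℝ := Real.sqrt (2 * Real.pi)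
lemma sq2_pos : 0 < sq2 := Real.sqrt_pos.2 (by positivity)
lemma sq2_le_three : sq2 ≤ 3 := by
  rw [sq2, show (3:ℝ) = Real.sqrt 9 by
    rw [show (9:ℝ) = 3^2 by norm_num, Real.sqrt_sq (by norm_num)]]
  exact Real.sqrt_le_sqrt (by nlinarith [Real.pi_le_four])

def rect (a b c d : ℝ) : Set E2 := {x | x 0 ∈ Icc a b ∧ x 1 ∈ Icc c d}
def oRect (a b c d : ℝ) : Set E2 := {x | x 0 ∈ Ioo a b ∧ x 1 ∈ Ioo c d}

lemma Pm_preimage_rect (a b c d : ℝ) : ⇑Pm ⁻¹' rect a b c d = Icc a b ×ˢ Icc c d := by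
  ext p; simp [rect, Pm_zero, Pm_one, Set.mem_prod, and_assoc, Prod.le_def]; tauto

lemma Pm_preimage_oRect (a b c d : ℝ) : ⇑Pm ⁻¹' oRect a b c d = Ioo a b ×ˢ Ioo c d := by
  ext p
  simp only [oRect, Set.mem_preimage, Set.mem_setOf_eq, Pm_zero, Pm_one, Set.mem_prod]

lemma contProj (i : Fin 2) : Continuous fun x : E2 => x i :=
  (EuclideanSpace.proj (𝕜 := ℝ) i).continuous

lemma isClosed_rect (a b c d : ℝ) : IsClosed (rect a b c d) := by
  have : rect a b c d = (fun x : E2 => x 0) ⁻¹' Icc a b ∩ (fun x : E2 => x 1) ⁻¹' Icc c d := rfl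
  rw [this]
  exact (isClosed_Icc.preimage (contProj 0)).inter (isClosed_Icc.preimage (contProj 1))

lemma isOpen_oRect (a b c d : ℝ) : IsOpen (oRect a b c d) := by
  have : oRect a b c d = (fun x : E2 => x 0) ⁻¹' Ioo a b ∩ (fun x : E2 => x 1) ⁻¹' Ioo c d := rfl
  rw [this]
  exact (isOpen_Ioo.preimage (contProj 0)).inter (isOpen_Ioo.preimage (contProj 1))

lemma volume_rect (a b c d : ℝ) :
    volume (rect a b c d) = ENNReal.ofReal (b - a) * ENNReal.ofReal (d - c) := by
  rw [← volume_pres.measure_preimage (isClosed_rect a b c d).measurableSet.nullMeasurableSet,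
    Pm_preimage_rect, Measure.volume_eq_prod, Measure.prod_prod, Real.volume_Icc,
    Real.volume_Icc]

lemma bigSquare_eq (N : ℕ) :
    ({x : E2 | x 0 ∈ Set.Ioo (-(Real.sqrt (2 * Real.pi) * N) / 2) (Real.sqrt (2 * Real.pi) * N / 2) ∧
       x 1 ∈ Set.Ioo (-(Real.sqrt (2 * Real.pi) * N) / 2) (Real.sqrt (2 * Real.pi) * N / 2)}) =
    oRect (-(sq2 * N) / 2) (sq2 * N / 2) (-(sq2 * N) / 2) (sq2 * N / 2) := rfl

section Green
variable {h : E2 → ℝ}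

lemma hg_contDiff (hh : ContDiff ℝ 2 h) (v : E2) :
    ContDiff ℝ 1 (fun y => fderiv ℝ h y v) :=
  (hh.fderiv_right (by norm_num)).clm_apply contDiff_const

lemma hD_cont (hh : ContDiff ℝ 2 h) (v e : E2) :
    Continuous (fun x => fderiv ℝ (fun y => fderiv ℝ h y v) x e) :=
  (ContinuousLinearMap.apply ℝ ℝ e).continuous.comp
    ((hg_contDiff hh v).continuous_fderiv one_ne_zero)

lemma lap_cont (hh : ContDiff ℝ 2 h) : Continuous (lap h) := by
  have : lap h = fun x =>
      fderiv ℝ (fun y => fderiv ℝ h y (EuclideanSpace.single 0 1)) x (EuclideanSpace.single 0 1) +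
      fderiv ℝ (fun y => fderiv ℝ h y (EuclideanSpace.single 1 1)) x (EuclideanSpace.single 1 1) :=
    funext fun x => Fin.sum_univ_two _
  rw [this]; exact (hD_cont hh _ _).add (hD_cont hh _ _)


/-- FTC slice in the first coordinate. -/
lemma ftc_slice (hh : ContDiff ℝ 2 h) (v : E2) (c : ℝ → E2) (e : E2)
    (hc : ∀ s : ℝ, HasDerivAt c e s) (a b : ℝ) (hab : a ≤ b) :
    ∫ s in Ioo a b, fderiv ℝ (fun y => fderiv ℝ h y v) (c s) e =
      fderiv ℝ h (c b) v - fderiv ℝ h (c a) v := by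
  rw [← MeasureTheory.integral_Ioc_eq_integral_Ioo, ← intervalIntegral.integral_of_le hab]
  apply intervalIntegral.integral_eq_sub_of_hasDerivAt
  · intro s _
    have hdiff : DifferentiableAt ℝ (fun y => fderiv ℝ h y v) (c s) :=
      ((hg_contDiff hh v).differentiable one_ne_zero) _
    exact hdiff.hasFDerivAt.comp_hasDerivAt s (hc s)
  · have hcc : Continuous c := by
      rw [continuous_iff_continuousAt]; exact fun s => (hc s).continuousAt
    exact Continuous.intervalIntegrable ((hD_cont hh v e).comp hcc) a b

end Green

section Green2
variable {h : E2 → ℝ}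

lemma bdry_bound {a b M₁ : ℝ} (hab : a ≤ b) (G : ℝ → ℝ)
    (hG : ∀ s ∈ Ioo a b, |G s| ≤ 2 * M₁) :
    |∫ s in Ioo a b, G s| ≤ 2 * M₁ * (b - a) := by
  have := norm_setIntegral_le_of_norm_le_const (μ := volume) (s := Ioo a b) (f := G)
    (by simp [Real.volume_Ioo]) (by simpa [Real.norm_eq_abs] using hG)
  simpa [Measure.real, Real.volume_Ioo, Real.norm_eq_abs, ENNReal.toReal_ofReal (sub_nonneg.2 hab)] using this

lemma curve0 (s t : ℝ) : HasDerivAt (fun u : ℝ => Pm (u, t)) (EuclideanSpace.single 0 1) s := by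
  have heq : (fun u : ℝ => Pm (u, t)) =
      fun u => Pm (0, t) + u • (EuclideanSpace.single 0 1 : E2) := by
    funext u
    refine ext2 ?_ ?_ <;>
      simp [Pm_zero, Pm_one, PiLp.add_apply, PiLp.smul_apply, EuclideanSpace.single_apply]
  rw [heq]
  simpa using ((hasDerivAt_id s).smul_const (EuclideanSpace.single 0 1 : E2)).const_add (Pm (0, t))

lemma curve1 (s t : ℝ) : HasDerivAt (fun u : ℝ => Pm (s, u)) (EuclideanSpace.single 1 1) t := by
  have heq : (fun u : ℝ => Pm (s, u)) =
      fun u => Pm (s, 0) + u • (EuclideanSpace.single 1 1 : E2) := by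
    funext u
    refine ext2 ?_ ?_ <;>
      simp [Pm_zero, Pm_one, PiLp.add_apply, PiLp.smul_apply, EuclideanSpace.single_apply]
  rw [heq]
  simpa using ((hasDerivAt_id t).smul_const (EuclideanSpace.single 1 1 : E2)).const_add (Pm (s, 0))

lemma green {a b : ℝ} (hab : a < b) (hh : ContDiff ℝ 2 h) {M₁ : ℝ}
    (hM : ∀ z ∈ rect a b a b, ‖fderiv ℝ h z‖ ≤ M₁) :
    |∫ x in oRect a b a b, lap h x| ≤ 4 * M₁ * (b - a) := by
  set e0 : E2 := EuclideanSpace.single 0 1 with he0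
  set e1 : E2 := EuclideanSpace.single 1 1 with he1
  set F0 : ℝ × ℝ → ℝ := fun p => fderiv ℝ (fun y => fderiv ℝ h y e0) (Pm p) e0 with hF0def
  set F1 : ℝ × ℝ → ℝ := fun p => fderiv ℝ (fun y => fderiv ℝ h y e1) (Pm p) e1 with hF1def
  have hrectmem : ∀ s t : ℝ, s ∈ Icc a b → t ∈ Icc a b → Pm (s, t) ∈ rect a b a b := by
    intro s t hs ht; exact ⟨by rw [Pm_zero]; exact hs, by rw [Pm_one]; exact ht⟩
  have hnorm_e : ∀ i : Fin 2, ‖(EuclideanSpace.single i 1 : E2)‖ = 1 := by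
    intro i; rw [EuclideanSpace.norm_single]; norm_num
  have hfd_bound : ∀ s t : ℝ, s ∈ Icc a b → t ∈ Icc a b → ∀ i : Fin 2,
      |fderiv ℝ h (Pm (s, t)) (EuclideanSpace.single i 1)| ≤ M₁ := by
    intro s t hs ht i
    calc |fderiv ℝ h (Pm (s, t)) (EuclideanSpace.single i 1)|
        ≤ ‖fderiv ℝ h (Pm (s, t))‖ * ‖(EuclideanSpace.single i 1 : E2)‖ :=
          (fderiv ℝ h (Pm (s, t))).le_opNorm _
      _ ≤ M₁ := by rw [hnorm_e]; simpa using hM _ (hrectmem s t hs ht)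
  have hFc0 : Continuous F0 := (hD_cont hh _ _).comp Pm_cont
  have hFc1 : Continuous F1 := (hD_cont hh _ _).comp Pm_cont
  have hIntF : ∀ F : ℝ × ℝ → ℝ, Continuous F → IntegrableOn F (Ioo a b ×ˢ Ioo a b) volume := by
    intro F hF
    exact (hF.continuousOn.integrableOn_compact (isCompact_Icc.prod isCompact_Icc)).mono_set
      (Set.prod_mono Ioo_subset_Icc_self Ioo_subset_Icc_self)
  have step1 : ∫ x in oRect a b a b, lap h x = ∫ p in Ioo a b ×ˢ Ioo a b, lap h (Pm p) := by
    have := volume_pres.setIntegral_preimage_emb Pm.measurableEmbedding (lap h) (oRect a b a b)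
    rw [Pm_preimage_oRect] at this; exact this.symm
  have step2 : (fun p => lap h (Pm p)) = fun p => F0 p + F1 p := by
    funext p; simp [lap, Fin.sum_univ_two, hF0def, hF1def, he0, he1]
  have step3 : ∫ p in Ioo a b ×ˢ Ioo a b, lap h (Pm p) =
      (∫ p in Ioo a b ×ˢ Ioo a b, F0 p) + ∫ p in Ioo a b ×ˢ Ioo a b, F1 p := by
    rw [step2]; exact integral_add (hIntF F0 hFc0) (hIntF F1 hFc1)
  -- F1 : integrate in second variable first
  have h1 : |∫ p in Ioo a b ×ˢ Ioo a b, F1 p| ≤ 2 * M₁ * (b - a) := by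
    have hfub : ∫ p in Ioo a b ×ˢ Ioo a b, F1 p = ∫ s in Ioo a b, ∫ t in Ioo a b, F1 (s, t) := by
      rw [Measure.volume_eq_prod]
      exact setIntegral_prod _ (by rw [← Measure.volume_eq_prod]; exact hIntF F1 hFc1)
    rw [hfub]
    rw [setIntegral_congr_fun measurableSet_Ioo (g := fun s =>
        fderiv ℝ h (Pm (s, b)) e1 - fderiv ℝ h (Pm (s, a)) e1)
      (fun s _ => ftc_slice hh e1 (fun t => Pm (s, t)) e1 (curve1 s) a b hab.le)]
    apply bdry_bound hab.le
    intro s hs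
    have h1' := hfd_bound s b (Ioo_subset_Icc_self hs) (right_mem_Icc.2 hab.le) 1
    have h2' := hfd_bound s a (Ioo_subset_Icc_self hs) (left_mem_Icc.2 hab.le) 1
    calc |fderiv ℝ h (Pm (s, b)) e1 - fderiv ℝ h (Pm (s, a)) e1|
        ≤ |fderiv ℝ h (Pm (s, b)) e1| + |fderiv ℝ h (Pm (s, a)) e1| := abs_sub _ _
      _ ≤ 2 * M₁ := by rw [he1]; linarith
  -- F0 : integrate in first variable first
  have h0 : |∫ p in Ioo a b ×ˢ Ioo a b, F0 p| ≤ 2 * M₁ * (b - a) := by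
    have hfub : ∫ p in Ioo a b ×ˢ Ioo a b, F0 p = ∫ t in Ioo a b, ∫ s in Ioo a b, F0 (s, t) := by
      rw [Measure.volume_eq_prod, ← Measure.prod_restrict]
      refine integral_prod_symm _ ?_
      rw [Measure.prod_restrict, ← Measure.volume_eq_prod]
      exact hIntF F0 hFc0
    rw [hfub]
    rw [setIntegral_congr_fun measurableSet_Ioo (g := fun t =>
        fderiv ℝ h (Pm (b, t)) e0 - fderiv ℝ h (Pm (a, t)) e0)
      (fun t _ => ftc_slice hh e0 (fun s => Pm (s, t)) e0 (fun s => curve0 s t) a b hab.le)]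
    apply bdry_bound hab.le
    intro t ht
    have h1' := hfd_bound b t (right_mem_Icc.2 hab.le) (Ioo_subset_Icc_self ht) 0
    have h2' := hfd_bound a t (left_mem_Icc.2 hab.le) (Ioo_subset_Icc_self ht) 0
    calc |fderiv ℝ h (Pm (b, t)) e0 - fderiv ℝ h (Pm (a, t)) e0|
        ≤ |fderiv ℝ h (Pm (b, t)) e0| + |fderiv ℝ h (Pm (a, t)) e0| := abs_sub _ _
      _ ≤ 2 * M₁ := by rw [he0]; linarith
  calc |∫ x in oRect a b a b, lap h x|
      ≤ |∫ p in Ioo a b ×ˢ Ioo a b, F0 p| + |∫ p in Ioo a b ×ˢ Ioo a b, F1 p| := by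
        rw [step1, step3]; exact abs_add_le _ _
    _ ≤ 4 * M₁ * (b - a) := by linarith

end Green2

noncomputable def glo (N : ℕ) (k : ℕ) : ℝ := -(sq2 * N) / 2 + sq2 * k
noncomputable def ghi (N : ℕ) (k : ℕ) : ℝ := -(sq2 * N) / 2 + sq2 * (k + 1)

lemma grid_eq (N : ℕ) (j : Fin N × Fin N) :
    gridSquare N j = rect (glo N j.1) (ghi N j.1) (glo N j.2) (ghi N j.2) := rfl

lemma ghi_sub_glo (N k : ℕ) : ghi N k - glo N k = sq2 := by
  simp only [glo, ghi]; ring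

lemma glo_le_ghi (N k : ℕ) : glo N k ≤ ghi N k := by
  nlinarith [ghi_sub_glo N k, sq2_pos]

lemma dist_pm (p q : ℝ × ℝ) :
    dist (Pm p) (Pm q) = Real.sqrt ((p.1 - q.1) ^ 2 + (p.2 - q.2) ^ 2) := by
  rw [EuclideanSpace.dist_eq, Fin.sum_univ_two]
  simp [Real.dist_eq, sq_abs, Pm_zero, Pm_one]

lemma cover1 {N : ℕ} {t : ℝ} (ht : t ∈ Ioo (-(sq2 * N) / 2) (sq2 * N / 2)) :
    ∃ k : Fin N, t ∈ Icc (glo N k) (ghi N k) := by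
  have hN : 0 < N := by
    by_contra hc
    push_neg at hc
    interval_cases N
    have h1 := ht.1; have h2 := ht.2
    simp at h1 h2; linarith
  set u := (t + sq2 * N / 2) / sq2 with hu
  have hu0 : 0 ≤ u := by
    apply div_nonneg _ sq2_pos.le
    have := ht.1; linarith
  have huN : u < N := by
    rw [hu, div_lt_iff₀ sq2_pos]
    have := ht.2; nlinarith [sq2_pos]
  have hk : ⌊u⌋₊ < N := by
    rw [Nat.floor_lt hu0]; exact_mod_cast huN
  refine ⟨⟨⌊u⌋₊, hk⟩, ?_, ?_⟩
  · have h1 : (⌊u⌋₊ : ℝ) ≤ u := Nat.floor_le hu0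
    rw [hu, le_div_iff₀ sq2_pos] at h1
    simp only [glo]; nlinarith [sq2_pos]
  · have h2 : u < ⌊u⌋₊ + 1 := Nat.lt_floor_add_one u
    rw [hu, div_lt_iff₀ sq2_pos] at h2
    simp only [ghi]; nlinarith [sq2_pos]

lemma cover {N : ℕ} {x : E2} (hx : x ∈ oRect (-(sq2 * N) / 2) (sq2 * N / 2)
    (-(sq2 * N) / 2) (sq2 * N / 2)) : ∃ j : Fin N × Fin N, x ∈ gridSquare N j := by
  obtain ⟨k1, hk1⟩ := cover1 hx.1
  obtain ⟨k2, hk2⟩ := cover1 hx.2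
  exact ⟨(k1, k2), hk1, hk2⟩

lemma dist_add_single (z : E2) (c : ℝ) (i : Fin 2) :
    dist (z + c • EuclideanSpace.single i 1) z = |c| := by
  rw [dist_eq_norm, add_sub_cancel_left, norm_smul, EuclideanSpace.norm_single]
  simp [Real.norm_eq_abs]

lemma add_single_coord (z : E2) (c : ℝ) (i k : Fin 2) :
    ((z + c • EuclideanSpace.single i 1 : E2)) k = z k + if i = k then c else 0 := by
  simp only [PiLp.add_apply, PiLp.smul_apply, EuclideanSpace.single_apply, smul_eq_mul, mul_ite,
    mul_one, mul_zero]
  congr 1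
  simp [eq_comm]

lemma frontier_rect_mem {a b c d : ℝ} {z : E2} (hz : z ∈ rect a b c d)
    (hface : z 0 = a ∨ z 0 = b ∨ z 1 = c ∨ z 1 = d) : z ∈ frontier (rect a b c d) := by
  rw [frontier_eq_closure_inter_closure]
  refine ⟨subset_closure hz, ?_⟩
  rw [Metric.mem_closure_iff]
  intro ε hε
  have key : ∀ (i : Fin 2) (c' : ℝ), c' ≠ 0 → |c'| < ε →
      (z + c' • EuclideanSpace.single i 1) ∉ rect a b c d →
      ∃ y ∈ (rect a b c d)ᶜ, dist z y < ε := by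
    intro i c' _ habs hnot
    refine ⟨z + c' • EuclideanSpace.single i 1, hnot, ?_⟩
    rw [dist_comm, dist_add_single]; exact habs
  have hhalf : |(-(ε/2) : ℝ)| < ε := by rw [abs_neg, abs_of_pos (by linarith)]; linarith
  have hhalf' : |(ε/2 : ℝ)| < ε := by rw [abs_of_pos (by linarith)]; linarith
  rcases hface with hf | hf | hf | hf
  · refine key 0 (-(ε/2)) (by linarith) hhalf ?_
    intro hmem
    have := hmem.1.1
    rw [add_single_coord] at this
    simp [hf] at this; linarith
  · refine key 0 (ε/2) (by linarith) hhalf' ?_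
    intro hmem
    have := hmem.1.2
    rw [add_single_coord] at this
    simp [hf] at this; linarith
  · refine key 1 (-(ε/2)) (by linarith) hhalf ?_
    intro hmem
    have := hmem.2.1
    rw [add_single_coord] at this
    simp [hf] at this; linarith
  · refine key 1 (ε/2) (by linarith) hhalf' ?_
    intro hmem
    have := hmem.2.2
    rw [add_single_coord] at this
    simp [hf] at this; linarith

noncomputable def isq (N : ℕ) (δ : ℝ) (j : Fin N × Fin N) : Set E2 :=
  rect (glo N j.1 + δ) (ghi N j.1 - δ) (glo N j.2 + δ) (ghi N j.2 - δ)

lemma vol_rect_le {a b c d w1 w2 : ℝ} (h1 : b - a ≤ w1) (h2 : d - c ≤ w2)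
    (hw1 : 0 ≤ w1) (hw2 : 0 ≤ w2) :
    volume (rect a b c d) ≤ ENNReal.ofReal (w1 * w2) := by
  rw [volume_rect, ENNReal.ofReal_mul hw1]
  exact mul_le_mul' (ENNReal.ofReal_le_ofReal h1) (ENNReal.ofReal_le_ofReal h2)

lemma grid_diff_isq_vol {N : ℕ} {δ : ℝ} (hδ0 : 0 ≤ δ) (j : Fin N × Fin N) :
    volume (gridSquare N j \ isq N δ j) ≤ ENNReal.ofReal (12 * δ) := by
  set A1 := glo N j.1; set B1 := ghi N j.1; set A2 := glo N j.2; set B2 := ghi N j.2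
  have h1 : B1 - A1 = sq2 := ghi_sub_glo N j.1
  have h2 : B2 - A2 = sq2 := ghi_sub_glo N j.2
  have hsub : gridSquare N j \ isq N δ j ⊆
      rect A1 (A1 + δ) A2 B2 ∪ rect (B1 - δ) B1 A2 B2 ∪
      rect A1 B1 A2 (A2 + δ) ∪ rect A1 B1 (B2 - δ) B2 := by
    rintro x ⟨hx, hnx⟩
    rw [grid_eq] at hx
    rw [isq] at hnx
    simp only [rect, Set.mem_setOf_eq, Set.mem_Icc, not_and, not_le] at hnx
    obtain ⟨⟨ha1, hb1⟩, ⟨ha2, hb2⟩⟩ := hx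
    by_cases c1 : A1 + δ ≤ x 0
    · by_cases c2 : x 0 ≤ B1 - δ
      · by_cases c3 : A2 + δ ≤ x 1
        · have := hnx ⟨c1, c2⟩ c3
          right
          exact ⟨⟨ha1, hb1⟩, this.le, hb2⟩
        · push_neg at c3
          left; right
          exact ⟨⟨ha1, hb1⟩, ha2, c3.le⟩
      · push_neg at c2
        left; left; right
        exact ⟨⟨c2.le, hb1⟩, ha2, hb2⟩
    · push_neg at c1
      left; left; left
      exact ⟨⟨ha1, c1.le⟩, ha2, hb2⟩
  have hv : ∀ s t : Set E2, volume (s ∪ t) ≤ volume s + volume t := fun s t => measure_union_le s t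
  have hst : ∀ (a b c d : ℝ), b - a ≤ δ → d - c ≤ sq2 →
      volume (rect a b c d) ≤ ENNReal.ofReal (3 * δ) := by
    intro a b c d hba hdc
    refine le_trans (vol_rect_le hba hdc hδ0 sq2_pos.le) (ENNReal.ofReal_le_ofReal ?_)
    nlinarith [sq2_le_three, sq2_pos]
  have hst' : ∀ (a b c d : ℝ), b - a ≤ sq2 → d - c ≤ δ →
      volume (rect a b c d) ≤ ENNReal.ofReal (3 * δ) := by
    intro a b c d hba hdc
    refine le_trans (vol_rect_le hba hdc sq2_pos.le hδ0) (ENNReal.ofReal_le_ofReal ?_)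
    nlinarith [sq2_le_three, sq2_pos]
  calc volume (gridSquare N j \ isq N δ j)
      ≤ volume (rect A1 (A1 + δ) A2 B2 ∪ rect (B1 - δ) B1 A2 B2 ∪
          rect A1 B1 A2 (A2 + δ)) + volume (rect A1 B1 (B2 - δ) B2) :=
        le_trans (measure_mono hsub) (hv _ _)
    _ ≤ (volume (rect A1 (A1 + δ) A2 B2 ∪ rect (B1 - δ) B1 A2 B2) +
          volume (rect A1 B1 A2 (A2 + δ))) + volume (rect A1 B1 (B2 - δ) B2) := by
        gcongr; exact hv _ _
    _ ≤ ((volume (rect A1 (A1 + δ) A2 B2) + volume (rect (B1 - δ) B1 A2 B2)) +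
          volume (rect A1 B1 A2 (A2 + δ))) + volume (rect A1 B1 (B2 - δ) B2) := by
        gcongr; exact hv _ _
    _ ≤ ((ENNReal.ofReal (3 * δ) + ENNReal.ofReal (3 * δ)) + ENNReal.ofReal (3 * δ)) +
          ENNReal.ofReal (3 * δ) := by
        gcongr
        · exact hst _ _ _ _ (by linarith) (by linarith)
        · exact hst _ _ _ _ (by linarith) (by linarith)
        · exact hst' _ _ _ _ (by linarith) (by linarith)
        · exact hst' _ _ _ _ (by linarith) (by linarith)
    _ = ENNReal.ofReal (12 * δ) := by
        rw [← ENNReal.ofReal_add (by linarith) (by linarith),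
          ← ENNReal.ofReal_add (by linarith) (by linarith),
          ← ENNReal.ofReal_add (by linarith) (by linarith)]
        congr 1; ring
        
lemma grid_vol (N : ℕ) (j : Fin N × Fin N) :
    volume (gridSquare N j) ≤ ENNReal.ofReal 9 := by
  rw [grid_eq]
  refine le_trans (vol_rect_le (le_of_eq (ghi_sub_glo N j.1)) (le_of_eq (ghi_sub_glo N j.2))
    sq2_pos.le sq2_pos.le) (ENNReal.ofReal_le_ofReal ?_)
  nlinarith [sq2_le_three, sq2_pos]

lemma bigSquare_oRect (N : ℕ) :
    bigSquare N = oRect (-(sq2 * N) / 2) (sq2 * N / 2) (-(sq2 * N) / 2) (sq2 * N / 2) := rfl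

lemma min_lip (c a b : ℝ) : |min c a - min c b| ≤ |a - b| := by
  rcases le_total c a with h1 | h1 <;> rcases le_total c b with h2 | h2
  · rw [min_eq_left h1, min_eq_left h2, sub_self, abs_zero]; exact abs_nonneg _
  · rw [min_eq_left h1, min_eq_right h2, abs_of_nonneg (by linarith)]
    linarith [le_abs_self (a - b)]
  · rw [min_eq_right h1, min_eq_left h2, abs_of_nonpos (by linarith)]
    linarith [neg_abs_le (a - b)]
  · rw [min_eq_right h1, min_eq_right h2]

lemma grid_meas {N : ℕ} (j : Fin N × Fin N) : MeasurableSet (gridSquare N j) := by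
  rw [grid_eq]; exact (isClosed_rect _ _ _ _).measurableSet

lemma isq_meas {N : ℕ} {δ : ℝ} (j : Fin N × Fin N) : MeasurableSet (isq N δ j) :=
  (isClosed_rect _ _ _ _).measurableSet

set_option maxHeartbeats 1000000 in
/-- There is a universal constant `C > 0` such that for every
`N ≥ 1`, every family `S` of 'good' grid subsquares of `K_R` (`R = √(2π)·N`) and
every `δ ∈ (0, √(2π)/4)` there is a cutoff `φ : ℝ² → [0,1]`, `C/δ`-Lipschitz,
vanishing outside the interiors of the good squares, equal to `1` on the points
of good squares at distance `> δ` from their boundaries, such that for every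
`C²` function `h`,
`|∫_{K_R} Δh·φ| ≤ C·(sup|∇h| + sup|Δh|)·(N_good·δ + N_bad + N)`. -/
theorem good_squares_cutoff_estimate :
    ∃ C > (0 : ℝ), ∀ N : ℕ, 1 ≤ N → ∀ S : Finset (Fin N × Fin N),
      ∀ δ ∈ Set.Ioo (0 : ℝ) (Real.sqrt (2 * Real.pi) / 4),
      ∃ φ : EuclideanSpace ℝ (Fin 2) → ℝ,
        (∀ x, φ x ∈ Set.Icc (0 : ℝ) 1) ∧
        LipschitzWith (Real.toNNReal (C / δ)) φ ∧
        (∀ x, x ∉ ⋃ j ∈ S, interior (gridSquare N j) → φ x = 0) ∧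
        (∀ j ∈ S, ∀ x ∈ gridSquare N j,
          δ < Metric.infDist x (frontier (gridSquare N j)) → φ x = 1) ∧
        ∀ h : EuclideanSpace ℝ (Fin 2) → ℝ, ContDiff ℝ 2 h → ∀ M₁ M₂ : ℝ,
          (∀ x ∈ bigSquare N, ‖fderiv ℝ h x‖ ≤ M₁) →
          (∀ x ∈ bigSquare N, |lap h x| ≤ M₂) →
          |∫ x in bigSquare N, lap h x * φ x| ≤
            C * (M₁ + M₂) * (S.card * δ + ((N : ℝ) ^ 2 - S.card) + N) := by
  refine ⟨21, by norm_num, ?_⟩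
  intro N hN S δ hδ
  obtain ⟨hδ0, hδ4⟩ := hδ
  have hδ4' : δ < sq2 / 4 := hδ4
  have hN1 : (1 : ℝ) ≤ (N : ℝ) := by exact_mod_cast hN
  set U : Set (EuclideanSpace ℝ (Fin 2)) := ⋃ j ∈ S, interior (gridSquare N j) with hU
  have hUc : (Uᶜ).Nonempty := by
    refine ⟨Pm (sq2 * N + 1, 0), fun hmem => ?_⟩
    rw [hU] at hmem
    simp only [Set.mem_iUnion] at hmem
    obtain ⟨j, _, hj⟩ := hmem
    have hj' := interior_subset hj
    rw [grid_eq] at hj'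
    have h2 := hj'.1.2
    rw [Pm_zero] at h2
    simp only [ghi] at h2
    have hj1 : ((j.1 : ℕ) : ℝ) + 1 ≤ (N : ℝ) := by exact_mod_cast j.1.isLt
    nlinarith [sq2_pos]
  set φ : EuclideanSpace ℝ (Fin 2) → ℝ := fun x => min 1 (Metric.infDist x Uᶜ / δ) with hφdef
  have hmem01 : ∀ x, φ x ∈ Set.Icc (0 : ℝ) 1 := fun x =>
    ⟨le_min zero_le_one (div_nonneg Metric.infDist_nonneg hδ0.le), min_le_left _ _⟩
  have hone : ∀ x : EuclideanSpace ℝ (Fin 2), Metric.ball x δ ⊆ U → φ x = 1 := by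
    intro x hb
    have hd : δ ≤ Metric.infDist x Uᶜ := by
      by_contra hc
      push_neg at hc
      rw [Metric.infDist_lt_iff hUc] at hc
      obtain ⟨y, hyU, hy⟩ := hc
      exact hyU (hb (show y ∈ Metric.ball x δ by rw [Metric.mem_ball, dist_comm]; exact hy))
    have h1r : (1 : ℝ) ≤ Metric.infDist x Uᶜ / δ := (one_le_div hδ0).2 hd
    simp only [hφdef]
    exact min_eq_left h1r
  have hmargin : ∀ j ∈ S, ∀ x ∈ isq N δ j, φ x = 1 := by
    intro j hj x hx
    apply hone
    intro y hy
    have hy0 := coord_le_dist y x 0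
    have hy1 := coord_le_dist y x 1
    have hdy : dist y x < δ := Metric.mem_ball.1 hy
    obtain ⟨⟨h1, h2⟩, h3, h4⟩ := hx
    have ha0 := abs_lt.1 (lt_of_le_of_lt hy0 hdy)
    have ha1 := abs_lt.1 (lt_of_le_of_lt hy1 hdy)
    have hyo : y ∈ oRect (glo N j.1) (ghi N j.1) (glo N j.2) (ghi N j.2) :=
      ⟨⟨by linarith, by linarith⟩, by linarith, by linarith⟩
    have hsubint : oRect (glo N j.1) (ghi N j.1) (glo N j.2) (ghi N j.2) ⊆
        interior (gridSquare N j) := by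
      apply interior_maximal _ (isOpen_oRect _ _ _ _)
      rw [grid_eq]
      rintro z ⟨⟨u1, u2⟩, u3, u4⟩
      exact ⟨⟨u1.le, u2.le⟩, u3.le, u4.le⟩
    exact Set.mem_biUnion hj (hsubint hyo)
  have hLip : LipschitzWith (Real.toNNReal (21 / δ)) φ := by
    apply LipschitzWith.of_dist_le_mul
    intro x y
    have hcoe : ((Real.toNNReal (21 / δ)) : ℝ) = 21 / δ :=
      Real.coe_toNNReal _ (by positivity)
    rw [hcoe]
    have h1 : |Metric.infDist x Uᶜ - Metric.infDist y Uᶜ| ≤ dist x y := by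
      rw [abs_sub_le_iff]
      constructor
      · linarith [Metric.infDist_le_infDist_add_dist (x := x) (y := y) (s := Uᶜ)]
      · linarith [Metric.infDist_le_infDist_add_dist (x := y) (y := x) (s := Uᶜ), dist_comm x y]
    have h2 : dist (φ x) (φ y) ≤ |Metric.infDist x Uᶜ / δ - Metric.infDist y Uᶜ / δ| := by
      rw [Real.dist_eq]
      exact min_lip _ _ _
    have h3 : |Metric.infDist x Uᶜ / δ - Metric.infDist y Uᶜ / δ| ≤ dist x y / δ := by
      rw [div_sub_div_same, abs_div, abs_of_pos hδ0]
      gcongr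
    have hd0 : 0 ≤ dist x y := dist_nonneg
    calc dist (φ x) (φ y) ≤ dist x y / δ := le_trans h2 h3
      _ ≤ 21 * dist x y / δ := by gcongr; nlinarith
      _ = 21 / δ * dist x y := by ring
  refine ⟨φ, hmem01, hLip, ?_, ?_, ?_⟩
  · -- vanishes outside U
    intro x hx
    have : Metric.infDist x Uᶜ = 0 := Metric.infDist_zero_of_mem hx
    simp only [hφdef, this, zero_div]
    simp
  · -- equals 1 deep inside good squares
    intro j hj x hx hdist
    apply hmargin j hj
    rw [grid_eq] at hx
    obtain ⟨⟨h1, h2⟩, h3, h4⟩ := hx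
    have hface : ∀ z : EuclideanSpace ℝ (Fin 2), z ∈ frontier (gridSquare N j) →
        δ < dist x z := fun z hz => lt_of_lt_of_le hdist (Metric.infDist_le_dist_of_mem hz)
    have key0 : ∀ c : ℝ, (Pm (c, x 1) ∈ frontier (gridSquare N j)) → δ < |x 0 - c| := by
      intro c hz
      have := hface _ hz
      rwa [show dist x (Pm (c, x 1)) = |x 0 - c| by
        conv_lhs => rw [← Pm_coords x]
        rw [dist_pm]
        simp [Pm_zero, Pm_one, sub_self, Real.sqrt_sq_eq_abs]] at this
    have key1 : ∀ c : ℝ, (Pm (x 0, c) ∈ frontier (gridSquare N j)) → δ < |x 1 - c| := by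
      intro c hz
      have := hface _ hz
      rwa [show dist x (Pm (x 0, c)) = |x 1 - c| by
        conv_lhs => rw [← Pm_coords x]
        rw [dist_pm]
        simp [Pm_zero, Pm_one, sub_self, Real.sqrt_sq_eq_abs]] at this
    have hf1 : δ < |x 0 - glo N j.1| := by
      apply key0
      rw [grid_eq]
      exact frontier_rect_mem ⟨by rw [Pm_zero]; exact ⟨le_rfl, glo_le_ghi N j.1⟩,
        by rw [Pm_one]; exact ⟨h3, h4⟩⟩ (Or.inl (Pm_zero _))
    have hf2 : δ < |x 0 - ghi N j.1| := by
      apply key0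
      rw [grid_eq]
      exact frontier_rect_mem ⟨by rw [Pm_zero]; exact ⟨glo_le_ghi N j.1, le_rfl⟩,
        by rw [Pm_one]; exact ⟨h3, h4⟩⟩ (Or.inr (Or.inl (Pm_zero _)))
    have hf3 : δ < |x 1 - glo N j.2| := by
      apply key1
      rw [grid_eq]
      exact frontier_rect_mem ⟨by rw [Pm_zero]; exact ⟨h1, h2⟩,
        by rw [Pm_one]; exact ⟨le_rfl, glo_le_ghi N j.2⟩⟩ (Or.inr (Or.inr (Or.inl (Pm_one _))))
    have hf4 : δ < |x 1 - ghi N j.2| := by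
      apply key1
      rw [grid_eq]
      exact frontier_rect_mem ⟨by rw [Pm_zero]; exact ⟨h1, h2⟩,
        by rw [Pm_one]; exact ⟨glo_le_ghi N j.2, le_rfl⟩⟩ (Or.inr (Or.inr (Or.inr (Pm_one _))))
    rw [abs_of_nonneg (by linarith)] at hf1 hf3
    rw [abs_of_nonpos (by linarith)] at hf2 hf4
    exact ⟨⟨by linarith, by linarith⟩, by linarith, by linarith⟩
  · -- the integral estimate
    intro h hh M₁ M₂ hM₁ hM₂
    set a : ℝ := -(sq2 * N) / 2 with hadef
    set b : ℝ := sq2 * N / 2 with hbdef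
    have hab : a < b := by
      rw [hadef, hbdef]; nlinarith [sq2_pos]
    have hbig : bigSquare N = oRect a b a b := bigSquare_oRect N
    have h0mem : (0 : EuclideanSpace ℝ (Fin 2)) ∈ bigSquare N := by
      rw [hbig]
      have hz0 : (0 : EuclideanSpace ℝ (Fin 2)) 0 = 0 := rfl
      have hz1 : (0 : EuclideanSpace ℝ (Fin 2)) 1 = 0 := rfl
      exact ⟨by rw [hz0]; exact ⟨by nlinarith [sq2_pos], by nlinarith [sq2_pos]⟩,
        by rw [hz1]; exact ⟨by nlinarith [sq2_pos], by nlinarith [sq2_pos]⟩⟩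
    have hM₁0 : 0 ≤ M₁ := le_trans (norm_nonneg _) (hM₁ 0 h0mem)
    have hM₂0 : 0 ≤ M₂ := le_trans (abs_nonneg _) (hM₂ 0 h0mem)
    have hSle : (S.card : ℝ) ≤ (N : ℝ) ^ 2 := by
      have h1 : S.card ≤ N * N := le_trans (Finset.card_le_univ S) (by simp [Finset.card_univ])
      have := (Nat.cast_le (α := ℝ)).2 h1
      push_cast at this
      nlinarith
    -- closure bound on the gradient
    have hMrect : ∀ z ∈ rect a b a b, ‖fderiv ℝ h z‖ ≤ M₁ := by
      have hclosed : IsClosed {z : EuclideanSpace ℝ (Fin 2) | ‖fderiv ℝ h z‖ ≤ M₁} :=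
        isClosed_le (hh.continuous_fderiv (by norm_num)).norm continuous_const
      have himg : Pm '' (Ioo a b ×ˢ Ioo a b) = oRect a b a b := by
        rw [← Pm_preimage_oRect, Set.image_preimage_eq _ Pm.surjective]
      intro z hz
      apply closure_minimal (fun w hw => hM₁ w hw) hclosed
      rw [hbig, ← himg]
      have hmem : (z 0, z 1) ∈ closure (Ioo a b ×ˢ Ioo a b) := by
        rw [closure_prod_eq, closure_Ioo hab.ne]
        exact ⟨hz.1, hz.2⟩
      have := image_closure_subset_closure_image (f := ⇑Pm) Pm_cont
        (Set.mem_image_of_mem _ hmem)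
      rwa [Pm_coords z] at this
    have hgreen : |∫ x in bigSquare N, lap h x| ≤ 4 * M₁ * (b - a) := by
      rw [hbig]; exact green hab hh hMrect
    have hba : b - a = sq2 * N := by rw [hadef, hbdef]; ring
    -- the bad/collar set
    set W : Set (EuclideanSpace ℝ (Fin 2)) := (⋃ j ∈ S, (gridSquare N j \ isq N δ j)) ∪
        (⋃ j ∈ (Finset.univ \ S : Finset (Fin N × Fin N)), gridSquare N j) with hWdef
    have hWmeas : MeasurableSet W := by
      apply MeasurableSet.union
      · exact MeasurableSet.biUnion S.countable_toSet
          (fun j _ => (grid_meas j).diff (isq_meas j))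
      · exact MeasurableSet.biUnion (Finset.univ \ S).countable_toSet
          (fun j _ => grid_meas j)
    set Rv : ℝ := 12 * δ * S.card + 9 * ((N : ℝ) ^ 2 - S.card) with hRvdef
    have hRv0 : 0 ≤ Rv := by
      rw [hRvdef]
      have : (0:ℝ) ≤ (S.card : ℝ) := Nat.cast_nonneg _
      nlinarith
    have hWvol : volume W ≤ ENNReal.ofReal Rv := by
      have hcard : (((Finset.univ \ S : Finset (Fin N × Fin N))).card : ℝ) =
          (N : ℝ) ^ 2 - S.card := by
        have hle : S.card ≤ (Finset.univ : Finset (Fin N × Fin N)).card :=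
          Finset.card_le_card (Finset.subset_univ S)
        have h9 : (((Finset.univ : Finset (Fin N × Fin N)).card : ℕ) : ℝ) = (N : ℝ) ^ 2 := by
          simp [Finset.card_univ]
          ring
        rw [Finset.card_sdiff_of_subset (Finset.subset_univ S), Nat.cast_sub hle, h9]
      calc volume W
          ≤ volume (⋃ j ∈ S, (gridSquare N j \ isq N δ j)) +
            volume (⋃ j ∈ (Finset.univ \ S : Finset (Fin N × Fin N)), gridSquare N j) :=
            measure_union_le _ _
        _ ≤ (∑ j ∈ S, volume (gridSquare N j \ isq N δ j)) +
            ∑ j ∈ (Finset.univ \ S : Finset (Fin N × Fin N)), volume (gridSquare N j) := by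
            gcongr <;> exact measure_biUnion_finset_le _ _
        _ ≤ (∑ _j ∈ S, ENNReal.ofReal (12 * δ)) +
            ∑ _j ∈ (Finset.univ \ S : Finset (Fin N × Fin N)), ENNReal.ofReal 9 :=
            add_le_add (Finset.sum_le_sum fun j _ => grid_diff_isq_vol hδ0.le j)
              (Finset.sum_le_sum fun j _ => grid_vol N j)
        _ = S.card * ENNReal.ofReal (12 * δ) +
            ((Finset.univ \ S : Finset (Fin N × Fin N))).card * ENNReal.ofReal 9 := by
            rw [Finset.sum_const, Finset.sum_const, nsmul_eq_mul, nsmul_eq_mul]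
        _ ≤ ENNReal.ofReal Rv := by
            have e1 : (S.card : ENNReal) * ENNReal.ofReal (12 * δ) =
                ENNReal.ofReal ((S.card : ℝ) * (12 * δ)) := by
              rw [ENNReal.ofReal_mul (Nat.cast_nonneg _), ENNReal.ofReal_natCast]
            have e2 : (((Finset.univ \ S : Finset (Fin N × Fin N)).card : ℕ) : ENNReal) *
                ENNReal.ofReal 9 = ENNReal.ofReal
                ((((Finset.univ \ S : Finset (Fin N × Fin N)).card : ℕ) : ℝ) * 9) := by
              rw [ENNReal.ofReal_mul (Nat.cast_nonneg _), ENNReal.ofReal_natCast]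
            rw [e1, e2, ← ENNReal.ofReal_add (mul_nonneg (Nat.cast_nonneg _)
              (by nlinarith [hδ0.le])) (mul_nonneg (Nat.cast_nonneg _) (by norm_num))]
            apply ENNReal.ofReal_le_ofReal
            rw [hcard, hRvdef]
            nlinarith [Nat.cast_nonneg (α := ℝ) S.card, hδ0.le]
    have hφcont : Continuous φ := hLip.continuous
    -- integrability
    have hKsub : bigSquare N ⊆ rect a b a b := by
      rw [hbig]
      rintro z ⟨⟨u1, u2⟩, u3, u4⟩
      exact ⟨⟨u1.le, u2.le⟩, u3.le, u4.le⟩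
    have hKcomp : IsCompact (rect a b a b) := by
      have himg : rect a b a b = Pm '' (Icc a b ×ˢ Icc a b) := by
        rw [← Pm_preimage_rect, Set.image_preimage_eq _ Pm.surjective]
      rw [himg]
      exact (isCompact_Icc.prod isCompact_Icc).image Pm_cont
    have hbigmeas : MeasurableSet (bigSquare N) := by
      rw [hbig]; exact (isOpen_oRect a b a b).measurableSet
    have hII : ∀ F : EuclideanSpace ℝ (Fin 2) → ℝ, Continuous F →
        IntegrableOn F (bigSquare N) := fun F hF =>
      (hF.continuousOn.integrableOn_compact hKcomp).mono_set hKsub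
    have hInt1 : IntegrableOn (lap h) (bigSquare N) := hII _ (lap_cont hh)
    have hInt2 : IntegrableOn (fun x => lap h x * (1 - φ x)) (bigSquare N) :=
      hII _ ((lap_cont hh).mul (continuous_const.sub hφcont))
    have hsplit : ∫ x in bigSquare N, lap h x * φ x =
        (∫ x in bigSquare N, lap h x) - ∫ x in bigSquare N, lap h x * (1 - φ x) := by
      rw [← integral_sub hInt1 hInt2]
      have : (fun x => lap h x * φ x) =
          fun x => lap h x - lap h x * (1 - φ x) := by funext x; ring
      rw [this]
    -- collar/bad-square bound
    have hcol : |∫ x in bigSquare N, lap h x * (1 - φ x)| ≤ M₂ * Rv := by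
      rw [← integral_inter_add_diff hWmeas hInt2]
      have hzero : ∫ x in bigSquare N \ W, lap h x * (1 - φ x) = 0 := by
        rw [setIntegral_congr_fun (hbigmeas.diff hWmeas)
          (g := fun _ => (0:ℝ)) ?_, integral_zero]
        rintro x ⟨hxb, hxW⟩
        rw [hbig] at hxb
        obtain ⟨j, hxj⟩ := cover hxb
        by_cases hjS : j ∈ S
        · have hxisq : x ∈ isq N δ j := by
            by_contra hni
            exact hxW (Set.mem_union_left _ (Set.mem_biUnion hjS ⟨hxj, hni⟩))
          have h1 : φ x = 1 := hmargin j hjS x hxisq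
          simp only [hφdef] at h1
          simp only [hφdef, h1]
          ring
        · exfalso
          exact hxW (Set.mem_union_right _ (Set.mem_biUnion
            (Finset.mem_sdiff.2 ⟨Finset.mem_univ j, hjS⟩) hxj))
      rw [hzero, add_zero]
      have hvol_lt : volume (bigSquare N ∩ W) < ⊤ :=
        lt_of_le_of_lt (le_trans (measure_mono Set.inter_subset_right) hWvol)
          ENNReal.ofReal_lt_top
      have hb1 := norm_setIntegral_le_of_norm_le_const (μ := volume)
        (s := bigSquare N ∩ W) (f := fun x => lap h x * (1 - φ x)) (C := M₂)
        hvol_lt ?_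
      · have htr : (volume (bigSquare N ∩ W)).toReal ≤ Rv :=
          ENNReal.toReal_le_of_le_ofReal hRv0
            (le_trans (measure_mono Set.inter_subset_right) hWvol)
        calc |∫ x in bigSquare N ∩ W, lap h x * (1 - φ x)|
            ≤ M₂ * (volume (bigSquare N ∩ W)).toReal := hb1
          _ ≤ M₂ * Rv := mul_le_mul_of_nonneg_left htr hM₂0
      · intro x hx
        have h01 := hmem01 x
        have hla := hM₂ x hx.1
        rw [Real.norm_eq_abs, abs_mul]
        calc |lap h x| * |1 - φ x| ≤ M₂ * 1 := by
              apply mul_le_mul hla _ (abs_nonneg _) hM₂0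
              rw [abs_le]
              constructor <;> [linarith [h01.2]; linarith [h01.1]]
          _ = M₂ := mul_one M₂
    -- final combination
    rw [hsplit]
    have habs : |(∫ x in bigSquare N, lap h x) - ∫ x in bigSquare N, lap h x * (1 - φ x)|
        ≤ 4 * M₁ * (sq2 * N) + M₂ * Rv := by
      calc |(∫ x in bigSquare N, lap h x) - ∫ x in bigSquare N, lap h x * (1 - φ x)|
          ≤ |∫ x in bigSquare N, lap h x| + |∫ x in bigSquare N, lap h x * (1 - φ x)| :=
            abs_sub _ _
        _ ≤ 4 * M₁ * (sq2 * N) + M₂ * Rv := by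
            rw [← hba]; exact add_le_add hgreen hcol
    refine le_trans habs ?_
    rw [hRvdef]
    have hc0 : (0:ℝ) ≤ (S.card : ℝ) := Nat.cast_nonneg _
    have hB0 : (0:ℝ) ≤ (N:ℝ)^2 - S.card := by linarith
    have hN0 : (0:ℝ) ≤ (N:ℝ) := by linarith
    nlinarith [sq2_le_three, sq2_pos, mul_nonneg hM₁0 hN0, mul_nonneg hM₂0 hB0,
      mul_nonneg (mul_nonneg hM₁0 hc0) hδ0.le, mul_nonneg (mul_nonneg hM₂0 hc0) hδ0.le,
      mul_nonneg hM₁0 hB0, mul_nonneg hM₂0 hN0, mul_nonneg hM₁0 hM₂0,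
      mul_nonneg (mul_nonneg hM₁0 hN0) sq2_pos.le]
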